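/- arXiv:2111.01551 — 4 statements merged into one kernel-verified Lean document; each statement's English description precedes it below -/
import Mathlib

section
/- In the Max-3SAT to Max-2SAT gadget reduction, if a 3-CNF formula x has |C| clauses and each clause is replaced by the 10-clause gadget, then OPT(f(x)) = 6·|C| + OPT(x), and consequently OPT(f(x)) ≤ 13·OPT(x). -/
/-- A literal: a variable with a polarity. -/
abbrev Lit (V : Type) := V × Bool

def evalLit {V : Type} (σ : V → Bool) (l : Lit V) : Bool :=
  if l.2 then σ l.1 else !(σ l.1)

def negLit {V : Type} (l : Lit V) : Lit V := (l.1, !l.2)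

/-- A 3-clause: a triple of literals. -/
abbrev C3 (V : Type) := Lit V × Lit V × Lit V

def sat3 {V : Type} (σ : V → Bool) (C : C3 V) : Bool :=
  evalLit σ C.1 || evalLit σ C.2.1 || evalLit σ C.2.2

/-- A 2-clause, given as a list of literals, is satisfied if some literal is true. -/
def sat2 {V : Type} (σ : V → Bool) (C : List (Lit V)) : Bool :=
  C.any (evalLit σ)

def liftLit {V : Type} {n : ℕ} (l : Lit V) : Lit (V ⊕ Fin n) := (Sum.inl l.1, l.2)

/-- The 10-clause Max-3SAT→Max-2SAT gadget for clause `C`, with fresh variable `Sum.inr i`. -/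
def gadget {V : Type} {n : ℕ} (C : C3 V) (i : Fin n) : List (List (Lit (V ⊕ Fin n))) :=
  let a := liftLit C.1
  let b := liftLit C.2.1
  let c := liftLit C.2.2
  let v : Lit (V ⊕ Fin n) := (Sum.inr i, true)
  [[a], [b], [c], [v], [negLit a, negLit b], [negLit a, negLit c], [negLit b, negLit c],
   [a, negLit v], [b, negLit v], [c, negLit v]]

/-- The 2-CNF formula `f(x)` obtained by replacing each clause by its gadget. -/
def gadgetFormula {V : Type} (x : List (C3 V)) : List (List (Lit (V ⊕ Fin x.length))) :=
  (List.finRange x.length).flatMap fun i => gadget (x.get i) i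

/-! ### Auxiliary lemmas -/

/-- the number of satisfied gadget clauses as a function of the literal values and `v`. -/
def gcount (a b c v : Bool) : ℕ :=
  a.toNat + b.toNat + c.toNat + v.toNat + (!a || !b).toNat + (!a || !c).toNat
  + (!b || !c).toNat + (a || !v).toNat + (b || !v).toNat + (c || !v).toNat

lemma evalLit_neg {V} (σ : V → Bool) (l : Lit V) : evalLit σ (negLit l) = !evalLit σ l := by
  cases l with | mk w b => cases b <;> simp [evalLit, negLit]

lemma evalLit_lift {V n} (σ : V ⊕ Fin n → Bool) (l : Lit V) :
    evalLit σ (liftLit l) = evalLit (σ ∘ Sum.inl) l := rfl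

lemma countP_gadget {V n} (σ : V ⊕ Fin n → Bool) (C : C3 V) (i : Fin n) :
    (gadget C i).countP (sat2 σ) =
      gcount (evalLit (σ ∘ Sum.inl) C.1) (evalLit (σ ∘ Sum.inl) C.2.1)
        (evalLit (σ ∘ Sum.inl) C.2.2) (σ (Sum.inr i)) := by
  have hvv : evalLit σ (Sum.inr i, true) = σ (Sum.inr i) := rfl
  have ite_toNat : ∀ b : Bool, (if b = true then (1:ℕ) else 0) = b.toNat := by decide
  simp only [gadget, List.countP_cons, List.countP_nil, sat2, List.any_cons, List.any_nil,
    evalLit_neg, evalLit_lift, hvv, gcount, Bool.or_false, ite_toNat]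
  ring

lemma gcount_le : ∀ a b c v : Bool, gcount a b c v ≤ 6 + (a || b || c).toNat := by decide

lemma gcount_opt : ∀ a b c : Bool,
    gcount a b c ((a && b) || (a && c) || (b && c)) = 6 + (a || b || c).toNat := by decide

lemma countP_flatMap' {α β} (p : β → Bool) (f : α → List β) (l : List α) :
    (l.flatMap f).countP p = (l.map fun a => (f a).countP p).sum := by
  induction l with
  | nil => simp
  | cons h t ih => simp [List.countP_append, ih]

lemma countP_eq_sum_toNat {α} (p : α → Bool) (l : List α) :
    l.countP p = (l.map fun a => (p a).toNat).sum := by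
  induction l with
  | nil => simp
  | cons h t ih => by_cases hp : p h <;> simp [List.countP_cons, hp, ih, Nat.add_comm]

lemma countP_eq_sum_finRange {α} (p : α → Bool) (l : List α) :
    l.countP p = ((List.finRange l.length).map fun i => (p (l.get i)).toNat).sum := by
  rw [countP_eq_sum_toNat]
  conv_lhs => rw [← List.map_get_finRange l]
  rw [List.map_map]
  rfl

lemma evalLit_not {V} (σ : V → Bool) (l : Lit V) :
    evalLit (fun v => !σ v) l = !evalLit σ l := by
  cases l with | mk w b => cases b <;> simp [evalLit]

lemma half_bound {V : Type} (x : List (C3 V)) (o₁ : ℕ)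
    (h₁ : IsGreatest {k | ∃ σ : V → Bool, k = x.countP (sat3 σ)} o₁) :
    x.length ≤ 2 * o₁ := by
  set σ : V → Bool := fun _ => true with hσ
  have hle1 : x.countP (sat3 σ) ≤ o₁ := h₁.2 ⟨σ, rfl⟩
  have hle2 : x.countP (sat3 (fun v => !σ v)) ≤ o₁ := h₁.2 ⟨_, rfl⟩
  have hsplit := List.length_eq_countP_add_countP (fun C => sat3 σ C) (l := x)
  have hmono : x.countP (fun C => ¬ sat3 σ C) ≤ x.countP (sat3 (fun v => !σ v)) := by
    apply List.countP_mono_left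
    intro C _ hC
    simp only [decide_eq_true_eq] at hC
    have hC' : sat3 σ C = false := by simpa using hC
    simp only [sat3, Bool.or_eq_false_iff] at hC'
    simp [sat3, evalLit_not, hC'.1.1, hC'.1.2, hC'.2]
  have e1 : x.countP (fun C => sat3 σ C) = x.countP (sat3 σ) := rfl
  omega

/-- OPT(f(x)) = 6·|C| + OPT(x) and hence OPT(f(x)) ≤ 13·OPT(x). -/
theorem stmt5 {V : Type} (x : List (C3 V)) (o₁ o₂ : ℕ)
    (h₁ : IsGreatest {k | ∃ σ : V → Bool, k = x.countP (sat3 σ)} o₁)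
    (h₂ : IsGreatest
      {k | ∃ σ : V ⊕ Fin x.length → Bool, k = (gadgetFormula x).countP (sat2 σ)} o₂) :
    o₂ = 6 * x.length + o₁ ∧ o₂ ≤ 13 * o₁ := by
  set n := x.length with hn
  -- general formula for the count
  have hform : ∀ σ : V ⊕ Fin n → Bool, (gadgetFormula x).countP (sat2 σ) =
      ((List.finRange n).map fun i => gcount (evalLit (σ ∘ Sum.inl) (x.get i).1)
        (evalLit (σ ∘ Sum.inl) (x.get i).2.1) (evalLit (σ ∘ Sum.inl) (x.get i).2.2)
        (σ (Sum.inr i))).sum := by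
    intro σ
    rw [gadgetFormula, countP_flatMap']
    congr 1
    apply List.map_congr_left
    intro i _
    exact countP_gadget σ (x.get i) i
  -- upper bound
  have hub : ∀ σ : V ⊕ Fin n → Bool,
      (gadgetFormula x).countP (sat2 σ) ≤ 6 * n + x.countP (sat3 (σ ∘ Sum.inl)) := by
    intro σ
    rw [hform σ]
    have hle : ((List.finRange n).map fun i => gcount (evalLit (σ ∘ Sum.inl) (x.get i).1)
        (evalLit (σ ∘ Sum.inl) (x.get i).2.1) (evalLit (σ ∘ Sum.inl) (x.get i).2.2)
        (σ (Sum.inr i))).sum ≤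
        ((List.finRange n).map fun i => 6 + (sat3 (σ ∘ Sum.inl) (x.get i)).toNat).sum := by
      apply List.sum_le_sum
      intro i _
      exact gcount_le _ _ _ _
    refine hle.trans ?_
    rw [List.sum_map_add]
    simp only [List.map_const', List.sum_replicate, List.length_finRange, smul_eq_mul, mul_comm]
    rw [← countP_eq_sum_finRange]
  -- lower bound: the optimal assignment extended with the majority value
  obtain ⟨σ₁, hσ₁⟩ := h₁.1
  set τ : V ⊕ Fin n → Bool := Sum.elim σ₁ (fun i =>
    (evalLit σ₁ (x.get i).1 && evalLit σ₁ (x.get i).2.1) ||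
    (evalLit σ₁ (x.get i).1 && evalLit σ₁ (x.get i).2.2) ||
    (evalLit σ₁ (x.get i).2.1 && evalLit σ₁ (x.get i).2.2)) with hτ
  have hτl : τ ∘ Sum.inl = σ₁ := rfl
  have hlb : (gadgetFormula x).countP (sat2 τ) = 6 * n + o₁ := by
    rw [hform τ, hτl]
    have : ∀ i ∈ List.finRange n, gcount (evalLit σ₁ (x.get i).1) (evalLit σ₁ (x.get i).2.1)
        (evalLit σ₁ (x.get i).2.2) (τ (Sum.inr i)) = 6 + (sat3 σ₁ (x.get i)).toNat := by
      intro i _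
      rw [hτ]
      exact gcount_opt _ _ _
    rw [List.map_congr_left this, List.sum_map_add]
    simp only [List.map_const', List.sum_replicate, List.length_finRange, smul_eq_mul, mul_comm]
    rw [← countP_eq_sum_finRange, ← hσ₁]
  -- combine
  have hle : o₂ ≤ 6 * n + o₁ := by
    obtain ⟨σ₂, hσ₂⟩ := h₂.1
    rw [hσ₂]
    exact (hub σ₂).trans (by gcongr; exact h₁.2 ⟨_, rfl⟩)
  have hge : 6 * n + o₁ ≤ o₂ := h₂.2 ⟨τ, hlb.symm⟩
  have heq : o₂ = 6 * n + o₁ := le_antisymm hle hge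
  refine ⟨heq, ?_⟩
  have := half_bound x o₁ h₁
  omega
end

section
/- Let x be a 2-CNF formula. For each clause (a ∨ b) of x form the NAE-clause (a, b, c) where c is a single fresh variable shared by all clauses. Then for any assignment with c = false, a clause (a ∨ b) is satisfied if and only if the NAE-clause (a, b, c) is NAE-satisfied; consequently, using the symmetry of NAE under complementation, the maximum number of NAE-satisfied clauses of the constructed instance equals the maximum number of satisfied clauses of x. -/
/-- A clause is NAE-satisfied if its three literals are not all equal. -/
def naeSat {V : Type} (σ : V → Bool) (C : C3 V) : Bool :=
  !(evalLit σ C.1 == evalLit σ C.2.1 && evalLit σ C.2.1 == evalLit σ C.2.2)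

/-- A 2-clause (a ∨ b) is satisfied if some literal is true. -/
def sat2c {V : Type} (σ : V → Bool) (C : Lit V × Lit V) : Bool :=
  evalLit σ C.1 || evalLit σ C.2

def liftLitU {V : Type} (l : Lit V) : Lit (V ⊕ Unit) := (Sum.inl l.1, l.2)

/-- The NAE-clause (a, b, c) built from a 2-clause (a ∨ b), where the fresh shared
variable is `Sum.inr ()`. -/
def naeOf {V : Type} (C : Lit V × Lit V) : C3 (V ⊕ Unit) :=
  (liftLitU C.1, liftLitU C.2, ((Sum.inr () : V ⊕ Unit), true))

lemma key {V : Type} (σ : V ⊕ Unit → Bool) (hc : σ (Sum.inr ()) = false)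
    (C : Lit V × Lit V) : sat2c (σ ∘ Sum.inl) C = naeSat σ (naeOf C) := by
  simp only [sat2c, naeSat, naeOf, evalLit, liftLitU, Function.comp]
  simp [hc]
  split <;> split <;>
    cases σ (Sum.inl C.1.1) <;> cases σ (Sum.inl C.2.1) <;> simp_all

lemma flipEval {V : Type} (σ : V → Bool) (l : Lit V) :
    evalLit (fun v => !σ v) l = !(evalLit σ l) := by
  simp [evalLit]; split <;> simp

lemma flipNae {V : Type} (σ : V → Bool) (C : C3 V) :
    naeSat (fun v => !σ v) C = naeSat σ C := by
  simp only [naeSat, flipEval]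
  cases evalLit σ C.1 <;> cases evalLit σ C.2.1 <;> cases evalLit σ C.2.2 <;> rfl

/-- under any assignment with c = false, a 2-clause is satisfied iff the
corresponding NAE-clause is NAE-satisfied; consequently the optima coincide. -/
theorem stmt7 {V : Type} (x : List (Lit V × Lit V)) (o₁ o₂ : ℕ)
    (h₁ : IsGreatest {k | ∃ σ : V → Bool, k = x.countP (sat2c σ)} o₁)
    (h₂ : IsGreatest
      {k | ∃ σ : V ⊕ Unit → Bool, k = x.countP (fun C => naeSat σ (naeOf C))} o₂) :
    (∀ σ : V ⊕ Unit → Bool, σ (Sum.inr ()) = false →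
      ∀ C ∈ x, sat2c (σ ∘ Sum.inl) C = naeSat σ (naeOf C)) ∧
    o₂ = o₁ := by
  refine ⟨fun σ hc C _ => key σ hc C, ?_⟩
  obtain ⟨⟨σ₁, hσ₁⟩, hub₁⟩ := h₁
  obtain ⟨⟨σ₂, hσ₂⟩, hub₂⟩ := h₂
  have count_eq : ∀ σ : V ⊕ Unit → Bool, σ (Sum.inr ()) = false →
      x.countP (fun C => naeSat σ (naeOf C)) = x.countP (sat2c (σ ∘ Sum.inl)) := by
    intro σ hc
    apply List.countP_congr
    intro C _
    rw [← key σ hc C]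
  apply le_antisymm
  · -- o₂ ≤ o₁
    -- WLOG σ₂ (Sum.inr ()) = false; otherwise flip
    set τ : V ⊕ Unit → Bool :=
      if σ₂ (Sum.inr ()) then (fun v => !σ₂ v) else σ₂ with hτ
    have hτc : τ (Sum.inr ()) = false := by
      simp [hτ]; split <;> simp_all
    have hcount : x.countP (fun C => naeSat τ (naeOf C)) =
        x.countP (fun C => naeSat σ₂ (naeOf C)) := by
      apply List.countP_congr; intro C _
      simp only [hτ]; split <;> simp [flipNae]
    have h2' : o₂ = x.countP (sat2c (τ ∘ Sum.inl)) := by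
      rw [hσ₂, ← hcount, count_eq τ hτc]
    rw [h2']
    exact hub₁ ⟨τ ∘ Sum.inl, rfl⟩
  · -- o₁ ≤ o₂
    set τ : V ⊕ Unit → Bool := Sum.elim σ₁ (fun _ => false) with hτ
    have hτc : τ (Sum.inr ()) = false := rfl
    have : o₁ = x.countP (fun C => naeSat τ (naeOf C)) := by
      rw [count_eq τ hτc, hσ₁]
      congr 1
    rw [this]
    exact hub₂ ⟨τ, rfl⟩
end

section
/- Let G be a multigraph constructed from an NAE-3SAT instance with m clauses and l literal occurrences as follows: vertices are literals a and ¬a for each variable; each clause (a ∨ b ∨ c) contributes the triangle edges (a,b), (b,c), (a,c); and for each variable a there are 2k parallel edges between a and ¬a where k is the number of occurrences of a or ¬a in the clauses. If τ is a truth assignment satisfying p NAE-clauses, then the cut (S, T), where S is the set of literals true under τ and T its complement, contains exactly 2l + 2p edges. -/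
/-- Number of occurrences of variable `v` among the literal occurrences of `x`. -/
def occ {V : Type} [DecidableEq V] (x : List (C3 V)) (v : V) : ℕ :=
  (x.flatMap fun C => [C.1.1, C.2.1.1, C.2.2.1]).count v

/-- Edge list of the multigraph: a triangle on the literals of each clause, plus
`2·occ x v` parallel edges between the literals `v` and `¬v` for each variable `v`. -/
noncomputable def edges {V : Type} [Fintype V] [DecidableEq V] (x : List (C3 V)) :
    List (Lit V × Lit V) :=
  (x.flatMap fun C => [(C.1, C.2.1), (C.2.1, C.2.2), (C.1, C.2.2)]) ++
  (Finset.univ.toList.flatMap fun v : V =>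
    List.replicate (2 * occ x v) (((v, true) : Lit V), ((v, false) : Lit V)))

lemma cnt_bool (a b c : Bool) :
    ((if (a != b) = true then (1:ℕ) else 0) + ((if (b != c) = true then 1 else 0) +
      (if (a != c) = true then 1 else 0))) =
      2 * (if (!(a == b && b == c)) = true then 1 else 0) := by
  cases a <;> cases b <;> cases c <;> decide

lemma cross_count {V : Type} (τ : V → Bool) (C : C3 V) :
    ([(C.1, C.2.1), (C.2.1, C.2.2), (C.1, C.2.2)].countP
      (fun e : Lit V × Lit V => evalLit τ e.1 != evalLit τ e.2)) =
      2 * (if naeSat τ C then 1 else 0) := by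
  simp only [List.countP_cons, List.countP_nil, naeSat, zero_add, add_zero]
  have := cnt_bool (evalLit τ C.1) (evalLit τ C.2.1) (evalLit τ C.2.2)
  clear this
  rcases Bool.eq_false_or_eq_true (evalLit τ C.1) with h1 | h1 <;>
  rcases Bool.eq_false_or_eq_true (evalLit τ C.2.1) with h2 | h2 <;>
  rcases Bool.eq_false_or_eq_true (evalLit τ C.2.2) with h3 | h3 <;> simp [h1, h2, h3]

lemma tri_part {V : Type} (x : List (C3 V)) (τ : V → Bool) :
    (x.flatMap fun C => [(C.1, C.2.1), (C.2.1, C.2.2), (C.1, C.2.2)]).countP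
      (fun e : Lit V × Lit V => evalLit τ e.1 != evalLit τ e.2) =
      2 * x.countP (naeSat τ) := by
  induction x with
  | nil => simp
  | cons C xs ih =>
    rw [List.flatMap_cons, List.countP_append, ih, cross_count, List.countP_cons]
    cases naeSat τ C <;> simp <;> ring

/-- if τ satisfies p NAE-clauses, the cut separating true literals from
false literals contains exactly 2l + 2p edges, where l is the number of literal
occurrences. -/
theorem stmt8 {V : Type} [Fintype V] [DecidableEq V]
    (x : List (C3 V)) (τ : V → Bool) :
    (edges x).countP (fun e => evalLit τ e.1 != evalLit τ e.2) =
      2 * (∑ v : V, occ x v) + 2 * x.countP (naeSat τ) := by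
  unfold edges
  rw [List.countP_append, tri_part]
  have h2 : ∀ L : List V, (L.flatMap fun v : V =>
      List.replicate (2 * occ x v) (((v, true) : Lit V), ((v, false) : Lit V))).countP
      (fun e : Lit V × Lit V => evalLit τ e.1 != evalLit τ e.2) =
      (L.map fun v => 2 * occ x v).sum := by
    intro L
    induction L with
    | nil => simp
    | cons v vs ih =>
      rw [List.flatMap_cons, List.countP_append, ih, List.map_cons, List.sum_cons]
      congr 1
      rw [List.countP_eq_length.mpr, List.length_replicate]
      intro a ha
      simp only [List.eq_of_mem_replicate ha]
      simp [evalLit]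
  rw [h2]
  have h3 : ((Finset.univ.toList : List V).map fun v => 2 * occ x v).sum
      = ∑ v : V, 2 * occ x v := Finset.sum_map_toList _ _
  rw [h3, ← Finset.mul_sum]
  ring
end

section
/- Let φ be a qCSP instance with m constraints, each constraint a Boolean function of q variables, and suppose each constraint is converted to at most q·2^q 3-CNF clauses such that a satisfied constraint yields all its clauses satisfiable (with suitable auxiliary variables) and a violated constraint forces at least one of its clauses to be unsatisfied. Let m' ≤ q·2^q·m be the total number of clauses. Then: (i) if φ is satisfiable, the resulting 3-CNF formula is satisfiable; (ii) if every assignment violates at least m/2 constraints of φ, then every assignment to the 3-CNF formula leaves at least m/2 clauses unsatisfied, hence satisfies at most m' − m/2 ≤ m'·(1 − ε₁) clauses, where ε₁ = 1/(2·q·2^q). -/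
/-- abstract qCSP → 3-CNF conversion. `A` is the type of assignments to
the original variables, `B` the type of assignments to the extended variable set, and
`r` the restriction map. Each of the `m` constraints `cons j` is replaced by a block of
at most q·2^q clauses (Boolean functions of the extended assignment), such that a
satisfied constraint has all its clauses simultaneously satisfiable (choosing the
auxiliary variables suitably, uniformly in the constraints), and a violated constraint
forces some clause of its block to be unsatisfied. Then:
(i) the total clause count m' is at most q·2^q·m;
(ii) if φ is satisfiable then the 3-CNF formula is satisfiable;
(iii) if every assignment violates at least m/2 constraints, every assignment satisfies
at most m' − m/2 ≤ m'·(1 − ε₁) clauses, where ε₁ = 1/(2·q·2^q). -/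
theorem stmt19 {A B : Type} (q m : ℕ) (hq : 1 ≤ q)
    (r : B → A) (cons : Fin m → A → Bool)
    (block : Fin m → List (B → Bool))
    (hsize : ∀ j, (block j).length ≤ q * 2 ^ q)
    (hsat : ∀ σ : A, ∃ τ : B, r τ = σ ∧
      ∀ j, cons j σ = true → ∀ C ∈ block j, C τ = true)
    (hviol : ∀ (τ : B) (j : Fin m), cons j (r τ) = false → ∃ C ∈ block j, C τ = false)
    (clauses : List (B → Bool))
    (hclauses : clauses = (List.finRange m).flatMap block) :
    clauses.length ≤ q * 2 ^ q * m ∧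
    ((∃ σ : A, ∀ j, cons j σ = true) → ∃ τ : B, ∀ C ∈ clauses, C τ = true) ∧
    ((∀ σ : A, (m : ℝ) / 2 ≤ ((List.finRange m).countP fun j => !cons j σ : ℕ)) →
      ∀ τ : B,
        ((clauses.countP fun C => C τ : ℕ) : ℝ) ≤ clauses.length - (m : ℝ) / 2 ∧
        ((clauses.countP fun C => C τ : ℕ) : ℝ) ≤
          (clauses.length : ℝ) * (1 - 1 / (2 * q * 2 ^ q))) := by
  subst hclauses
  set L := (List.finRange m).flatMap block with hL
  have hlen : L.length ≤ q * 2 ^ q * m := by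
    rw [hL, List.length_flatMap]
    calc (List.map (List.length ∘ block) (List.finRange m)).sum
        ≤ (List.map (List.length ∘ block) (List.finRange m)).length • (q * 2 ^ q) := by
          apply List.sum_le_card_nsmul
          intro x hx
          simp only [List.mem_map] at hx
          obtain ⟨j, -, rfl⟩ := hx
          exact hsize j
      _ = q * 2 ^ q * m := by simp [Nat.mul_comm, smul_eq_mul]
  refine ⟨hlen, ?_, ?_⟩
  · rintro ⟨σ, hσ⟩
    obtain ⟨τ, -, hτ⟩ := hsat σ
    refine ⟨τ, fun C hC => ?_⟩
    rw [hL, List.mem_flatMap] at hC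
    obtain ⟨j, -, hCj⟩ := hC
    exact hτ j (hσ j) C hCj
  · intro hhalf τ
    -- count of false clauses ≥ count of violated constraints
    have key : ∀ l : List (Fin m),
        (l.countP fun j => !cons j (r τ)) ≤
        (List.map (List.countP (fun C => !(C τ)) ∘ block) l).sum := by
      intro l
      induction l with
      | nil => simp
      | cons j l ih =>
        simp only [List.countP_cons, List.map_cons, List.sum_cons, Function.comp_apply]
        by_cases h : cons j (r τ) = false
        · obtain ⟨C, hC, hCf⟩ := hviol τ j h
          have h1 : 1 ≤ List.countP (fun C => !(C τ)) (block j) := by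
            rw [Nat.one_le_iff_ne_zero, Ne, List.countP_eq_zero]
            push_neg
            exact ⟨C, hC, by simp [hCf]⟩
          rw [h]
          simp only [Bool.not_false, if_true, decide_true, if_pos trivial]
          linarith
        · have h' : cons j (r τ) = true := by
            revert h; cases cons j (r τ) <;> simp
          rw [h']
          simp only [Bool.not_true, Bool.false_eq_true, if_false]
          linarith
    have hfalse : (m : ℝ) / 2 ≤ (L.countP fun C => !(C τ) : ℕ) := by
      refine le_trans (hhalf (r τ)) ?_
      have := key (List.finRange m)
      rw [hL, List.countP_flatMap]
      exact_mod_cast this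
    have hsplit : L.length = (L.countP fun C => C τ) + (L.countP fun C => !(C τ)) := by
      have := List.length_eq_countP_add_countP (fun C : B → Bool => C τ) (l := L)
      convert this using 3
      simp
    have h1 : ((L.countP fun C => C τ : ℕ) : ℝ) ≤ (L.length : ℝ) - (m : ℝ) / 2 := by
      have : ((L.countP fun C => C τ : ℕ) : ℝ) = (L.length : ℝ) - ((L.countP fun C => !(C τ) : ℕ) : ℝ) := by
        rw [hsplit]; push_cast; ring
      rw [this]
      linarith
    refine ⟨h1, le_trans h1 ?_⟩
    have hq2 : (0 : ℝ) < 2 * q * 2 ^ q := by positivity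
    have hlenR : (L.length : ℝ) ≤ (q : ℝ) * 2 ^ q * m := by exact_mod_cast hlen
    rw [mul_sub, mul_one, sub_le_sub_iff_left, mul_one_div, div_le_div_iff₀ hq2 two_pos]
    nlinarith [hlenR]
end
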